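/- With the same noisy-data setting, the high-frequency error satisfies E[‖P_H e_{k+1}‖² | e_k] ≤ c₂‖P_L e_k‖² + (1+c₂)‖P_H e_k‖² + δ²/‖A‖_F² + (2/‖A‖_F)·δ·√c₂·‖e_k‖. -/

import Mathlib

/-!
Write the noisy step as `e' = r + (η / ‖a‖²) a`, where `r = e - (⟪a, e⟫ / ‖a‖²) a` is the exact
Kaczmarz step. For an orthogonal projection `P`, the weighted norm `‖a‖² ‖P e'‖²` expands into
`‖a‖² ‖P e‖² - 2 ⟪a, e⟫ ⟪a, P e⟫ + ⟪a, e⟫² ‖P a‖² / ‖a‖²` plus the noise terms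
`2 η ⟪a, P r⟫ + η² ‖P a‖² / ‖a‖²`. Summed over the rows,
`∑ ⟪aᵢ, e⟫ ⟪aᵢ, P e⟫ = ‖A P e‖² ≥ 0` because `P` commutes with `AᵀA`; Cauchy–Schwarz gives
`⟪a, e⟫² ≤ ‖a‖² ‖e‖²`, and `∑ ‖P aᵢ‖² = ‖A P‖_F²`, which for `P = P_H` is `c₂ ‖A‖_F²`.
Since `‖r‖ ≤ ‖e‖`, Cauchy–Schwarz in `ℝⁿ` bounds the linear noise term by `δ ‖e‖ ‖A P‖_F`,
and the quadratic one is at most `‖η‖² ≤ δ²`.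
-/

open Matrix Finset
open scoped RealInnerProductSpace

namespace LinearMap.IsSymmetricProjection

variable {E : Type*} [NormedAddCommGroup E] [InnerProductSpace ℝ E] {P : E →ₗ[ℝ] E}

theorem inner_map_map (hP : P.IsSymmetricProjection) (x y : E) : ⟪P x, P y⟫ = ⟪x, P y⟫ := by
  rw [hP.isSymmetric x (P y), ← Module.End.mul_apply, hP.isIdempotentElem.eq]

theorem norm_map_le (hP : P.IsSymmetricProjection) (x : E) : ‖P x‖ ≤ ‖x‖ := by
  have h : ‖P x‖ ^ 2 ≤ ‖x‖ * ‖P x‖ := by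
    rw [← real_inner_self_eq_norm_sq, hP.inner_map_map]
    exact real_inner_le_norm _ _
  nlinarith [norm_nonneg (P x), norm_nonneg x]

theorem norm_sub_map_sq_add_norm_map_sq (hP : P.IsSymmetricProjection) (x : E) :
    ‖x - P x‖ ^ 2 + ‖P x‖ ^ 2 = ‖x‖ ^ 2 := by
  have h : ⟪x - P x, P x⟫ = 0 := by
    rw [inner_sub_left, hP.inner_map_map, sub_self]
  have hx := norm_add_sq_real (x - P x) (P x)
  rw [sub_add_cancel, h] at hx
  linarith

end LinearMap.IsSymmetricProjection

section Kaczmarz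

variable {E : Type*} [NormedAddCommGroup E] [InnerProductSpace ℝ E]

noncomputable def kaczmarzStep (a e : E) : E := e - (⟪a, e⟫ / ‖a‖ ^ 2) • a

noncomputable def noisyKaczmarzStep (a e : E) (η : ℝ) : E := kaczmarzStep a e + (η / ‖a‖ ^ 2) • a

theorem norm_kaczmarzStep_le (a e : E) : ‖kaczmarzStep a e‖ ≤ ‖e‖ := by
  have h : kaczmarzStep a e = (ℝ ∙ a)ᗮ.starProjection e := by
    simp [kaczmarzStep, Submodule.starProjection_singleton]
  exact h ▸ Submodule.norm_starProjection_apply_le _ e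

variable {P : E →ₗ[ℝ] E}

theorem sq_norm_mul_sq_norm_map_add_div_smul (hP : P.IsSymmetricProjection) (a x : E) (c : ℝ) :
    ‖a‖ ^ 2 * ‖P (x + (c / ‖a‖ ^ 2) • a)‖ ^ 2 =
      ‖a‖ ^ 2 * ‖P x‖ ^ 2 + 2 * c * ⟪a, P x⟫ + c ^ 2 * ‖P a‖ ^ 2 / ‖a‖ ^ 2 := by
  rcases eq_or_ne a 0 with rfl | ha
  · simp
  have hw : ‖a‖ ^ 2 ≠ 0 := by positivity
  rw [map_add, map_smul, norm_add_sq_real, inner_smul_right, norm_smul, mul_pow,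
    Real.norm_eq_abs, sq_abs, real_inner_comm, hP.inner_map_map]
  field_simp

theorem sq_norm_mul_sq_norm_map_kaczmarzStep_le (hP : P.IsSymmetricProjection) (a e : E) :
    ‖a‖ ^ 2 * ‖P (kaczmarzStep a e)‖ ^ 2 ≤
      ‖a‖ ^ 2 * ‖P e‖ ^ 2 - 2 * ⟪a, e⟫ * ⟪a, P e⟫ + ‖P a‖ ^ 2 * ‖e‖ ^ 2 := by
  have hstep : kaczmarzStep a e = e + (-⟪a, e⟫ / ‖a‖ ^ 2) • a := by
    rw [kaczmarzStep, neg_div, neg_smul, sub_eq_add_neg]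
  have hcs : ⟪a, e⟫ ^ 2 * ‖P a‖ ^ 2 / ‖a‖ ^ 2 ≤ ‖P a‖ ^ 2 * ‖e‖ ^ 2 := by
    refine div_le_of_le_mul₀ (by positivity) (by positivity) ?_
    have hae : ⟪a, e⟫ ^ 2 ≤ (‖a‖ * ‖e‖) ^ 2 := sq_le_sq' (neg_le_of_abs_le
      (abs_real_inner_le_norm a e)) (le_of_abs_le (abs_real_inner_le_norm a e))
    nlinarith [mul_le_mul_of_nonneg_right hae (sq_nonneg ‖P a‖)]
  rw [hstep, sq_norm_mul_sq_norm_map_add_div_smul hP, neg_sq]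
  linarith

theorem sq_norm_mul_sq_norm_map_noisyKaczmarzStep_le (hP : P.IsSymmetricProjection)
    (a e : E) (η : ℝ) :
    ‖a‖ ^ 2 * ‖P (noisyKaczmarzStep a e η)‖ ^ 2 ≤
      ‖a‖ ^ 2 * ‖P (kaczmarzStep a e)‖ ^ 2 + 2 * η * ⟪a, P (kaczmarzStep a e)⟫ + η ^ 2 := by
  have h : η ^ 2 * ‖P a‖ ^ 2 / ‖a‖ ^ 2 ≤ η ^ 2 := by
    refine div_le_of_le_mul₀ (by positivity) (by positivity) ?_
    have := hP.norm_map_le a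
    gcongr
  rw [noisyKaczmarzStep, sq_norm_mul_sq_norm_map_add_div_smul hP]
  linarith

variable {ι : Type*} [Fintype ι]

theorem sum_inner_mul_inner_map_nonneg (hP : P.IsSymmetricProjection) (a : ι → E)
    (hcomm : ∀ x, P (∑ i, ⟪a i, x⟫ • a i) = ∑ i, ⟪a i, P x⟫ • a i) (e : E) :
    0 ≤ ∑ i, ⟪a i, e⟫ * ⟪a i, P e⟫ :=
  calc 0 ≤ ∑ i, ⟪a i, P e⟫ ^ 2 := sum_nonneg fun i _ => sq_nonneg _
    _ = ⟪∑ i, ⟪a i, P e⟫ • a i, P e⟫ := by simp [sum_inner, real_inner_smul_left, sq]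
    _ = ⟪∑ i, ⟪a i, e⟫ • a i, P e⟫ := by rw [← hcomm, hP.inner_map_map]
    _ = ∑ i, ⟪a i, e⟫ * ⟪a i, P e⟫ := by simp [sum_inner, real_inner_smul_left]

theorem sum_sq_norm_mul_sq_norm_map_noisyKaczmarzStep_le (hP : P.IsSymmetricProjection)
    (a : ι → E) (hcomm : ∀ x, P (∑ i, ⟪a i, x⟫ • a i) = ∑ i, ⟪a i, P x⟫ • a i)
    (e : E) (η : ι → ℝ) {δ : ℝ} (hδ : 0 ≤ δ) (hη : ∑ i, η i ^ 2 ≤ δ ^ 2) :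
    ∑ i, ‖a i‖ ^ 2 * ‖P (noisyKaczmarzStep (a i) e (η i))‖ ^ 2 ≤
      (∑ i, ‖a i‖ ^ 2) * ‖P e‖ ^ 2 + (∑ i, ‖P (a i)‖ ^ 2) * ‖e‖ ^ 2 + δ ^ 2 +
        2 * δ * √(∑ i, ‖P (a i)‖ ^ 2) * ‖e‖ := by
  set γ := fun i => ⟪a i, P (kaczmarzStep (a i) e)⟫
  have hγ : ∀ i, |γ i| ≤ ‖P (a i)‖ * ‖e‖ := fun i =>
    calc |γ i| = |⟪P (a i), P (kaczmarzStep (a i) e)⟫| := by rw [hP.inner_map_map]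
      _ ≤ ‖P (a i)‖ * ‖P (kaczmarzStep (a i) e)‖ := abs_real_inner_le_norm _ _
      _ ≤ ‖P (a i)‖ * ‖e‖ := by
        gcongr
        exact (hP.norm_map_le _).trans (norm_kaczmarzStep_le _ _)
  have hnoise : ∑ i, η i * γ i ≤ δ * √(∑ i, ‖P (a i)‖ ^ 2) * ‖e‖ :=
    calc ∑ i, η i * γ i ≤ √(∑ i, η i ^ 2) * √(∑ i, γ i ^ 2) :=
          Real.sum_mul_le_sqrt_mul_sqrt _ _ _
      _ ≤ δ * √(∑ i, (‖P (a i)‖ * ‖e‖) ^ 2) := by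
        refine mul_le_mul (Real.sqrt_le_iff.mpr ⟨hδ, hη⟩)
          (Real.sqrt_le_sqrt (sum_le_sum fun i _ => ?_)) (Real.sqrt_nonneg _) hδ
        exact sq_le_sq' (neg_le_of_abs_le (hγ i)) (le_of_abs_le (hγ i))
      _ = δ * √(∑ i, ‖P (a i)‖ ^ 2) * ‖e‖ := by
        simp_rw [mul_pow, ← sum_mul]
        rw [Real.sqrt_mul (sum_nonneg fun i _ => sq_nonneg _), Real.sqrt_sq (norm_nonneg e),
          mul_assoc]
  have hdrift := sum_inner_mul_inner_map_nonneg hP a hcomm e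
  calc ∑ i, ‖a i‖ ^ 2 * ‖P (noisyKaczmarzStep (a i) e (η i))‖ ^ 2
      ≤ ∑ i, (‖a i‖ ^ 2 * ‖P e‖ ^ 2 - 2 * (⟪a i, e⟫ * ⟪a i, P e⟫) + ‖P (a i)‖ ^ 2 * ‖e‖ ^ 2
          + 2 * (η i * γ i) + η i ^ 2) := by
        gcongr with i
        have := sq_norm_mul_sq_norm_map_kaczmarzStep_le hP (a i) e
        linarith [sq_norm_mul_sq_norm_map_noisyKaczmarzStep_le hP (a i) e (η i)]
    _ = (∑ i, ‖a i‖ ^ 2) * ‖P e‖ ^ 2 - 2 * ∑ i, ⟪a i, e⟫ * ⟪a i, P e⟫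
          + (∑ i, ‖P (a i)‖ ^ 2) * ‖e‖ ^ 2 + 2 * ∑ i, η i * γ i + ∑ i, η i ^ 2 := by
        simp only [sum_add_distrib, sum_sub_distrib, ← sum_mul, ← mul_sum]
    _ ≤ _ := by linarith

theorem sum_weighted_sq_norm_map_noisyKaczmarzStep_le (hP : P.IsSymmetricProjection)
    (a : ι → E) (hcomm : ∀ x, P (∑ i, ⟪a i, x⟫ • a i) = ∑ i, ⟪a i, P x⟫ • a i)
    (e : E) (η : ι → ℝ) {δ : ℝ} (hδ : 0 ≤ δ) (hη : ∑ i, η i ^ 2 ≤ δ ^ 2)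
    {F c : ℝ} (hF : F = ∑ i, ‖a i‖ ^ 2) (hc : c = (∑ i, ‖P (a i)‖ ^ 2) / F) :
    ∑ i, ‖a i‖ ^ 2 / F * ‖P (noisyKaczmarzStep (a i) e (η i))‖ ^ 2 ≤
      c * ‖e - P e‖ ^ 2 + (1 + c) * ‖P e‖ ^ 2 + δ ^ 2 / F + 2 / √F * δ * √c * ‖e‖ := by
  have key := sum_sq_norm_mul_sq_norm_map_noisyKaczmarzStep_le hP a hcomm e η hδ hη
  rw [← hF] at key
  rw [← hP.norm_sub_map_sq_add_norm_map_sq e] at key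
  rcases (show 0 ≤ F by rw [hF]; positivity).eq_or_lt with hF0 | hFpos
  · simp only [hc, ← hF0, div_zero, Real.sqrt_zero, zero_mul, mul_zero, sum_const_zero,
      zero_add, add_zero, one_mul]
    positivity
  have hB : ∑ i, ‖P (a i)‖ ^ 2 = c * F := by rw [hc, div_mul_cancel₀ _ hFpos.ne']
  have hc0 : 0 ≤ c := hc ▸ by positivity
  rw [hB, Real.sqrt_mul hc0] at key
  have hsF : √F ^ 2 = F := Real.sq_sqrt hFpos.le
  calc ∑ i, ‖a i‖ ^ 2 / F * ‖P (noisyKaczmarzStep (a i) e (η i))‖ ^ 2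
      = (∑ i, ‖a i‖ ^ 2 * ‖P (noisyKaczmarzStep (a i) e (η i))‖ ^ 2) / F := by
        rw [sum_div]
        exact sum_congr rfl fun i _ => div_mul_eq_mul_div _ _ _
    _ ≤ (F * ‖P e‖ ^ 2 + c * F * (‖e - P e‖ ^ 2 + ‖P e‖ ^ 2) + δ ^ 2
          + 2 * δ * (√c * √F) * ‖e‖) / F := by gcongr
    _ = _ := by
        field_simp
        linear_combination (2 * δ * √c * ‖e‖) * hsF

end Kaczmarz

section ColumnProjection

variable {ι : Type*} [Fintype ι] [DecidableEq ι]

/-- For orthogonal `V`, the orthogonal projection onto the span of the columns `V · j`, `j ∈ s`: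
this is the form of `P_L` and `P_H`. -/
noncomputable def colProj (V : Matrix ι ι ℝ) (s : Finset ι) : Matrix ι ι ℝ :=
  V * diagonal (fun j => if j ∈ s then 1 else 0) * Vᵀ

theorem colProj_mulVec_apply (V : Matrix ι ι ℝ) (s : Finset ι) (z : ι → ℝ) (k : ι) :
    (colProj V s *ᵥ z) k = ∑ j ∈ s, (∑ l, V l j * z l) * V k j := by
  simp only [colProj, mulVec, dotProduct, mul_apply, diagonal_apply, transpose_apply,
    mul_ite, mul_one, mul_zero, sum_ite_eq', mem_univ, if_true, sum_mul, ite_mul, zero_mul,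
    sum_ite_mem, univ_inter]
  rw [sum_comm]
  exact sum_congr rfl fun j _ => sum_congr rfl fun l _ => by ring

theorem colProj_transpose (V : Matrix ι ι ℝ) (s : Finset ι) : (colProj V s)ᵀ = colProj V s := by
  simp [colProj, transpose_mul, Matrix.mul_assoc]

theorem conj_diagonal_mul_conj_diagonal {V : Matrix ι ι ℝ} (hV : Vᵀ * V = 1) (d g : ι → ℝ) :
    V * diagonal d * Vᵀ * (V * diagonal g * Vᵀ) = V * diagonal (d * g) * Vᵀ := by
  simp only [Matrix.mul_assoc]
  rw [← Matrix.mul_assoc Vᵀ, hV, Matrix.one_mul, ← Matrix.mul_assoc (diagonal d),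
    diagonal_mul_diagonal']
  rfl

theorem colProj_mul_self {V : Matrix ι ι ℝ} (hV : Vᵀ * V = 1) (s : Finset ι) :
    colProj V s * colProj V s = colProj V s := by
  rw [colProj, conj_diagonal_mul_conj_diagonal hV]
  congr 3
  ext j
  by_cases hj : j ∈ s <;> simp [hj]

theorem colProj_add_colProj_compl {V : Matrix ι ι ℝ} (hV : V * Vᵀ = 1) (s : Finset ι) :
    colProj V s + colProj V sᶜ = 1 := by
  have hsum :
      (diagonal fun j => (if j ∈ s then (1 : ℝ) else 0) + if j ∈ sᶜ then 1 else 0) = 1 := by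
    rw [← diagonal_one]
    congr 1
    ext j
    by_cases hj : j ∈ s <;> simp [hj]
  rw [colProj, colProj, ← add_mul, ← Matrix.mul_add, diagonal_add, hsum, Matrix.mul_one, hV]

theorem colProj_compl_mulVec {V : Matrix ι ι ℝ} (hV : V * Vᵀ = 1) (s : Finset ι) (z : ι → ℝ) :
    colProj V sᶜ *ᵥ z = z - colProj V s *ᵥ z := by
  rw [eq_sub_of_add_eq' (colProj_add_colProj_compl hV s), sub_mulVec, one_mulVec]

theorem commute_colProj_conj_diagonal {V : Matrix ι ι ℝ} (hV : Vᵀ * V = 1) (s : Finset ι)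
    (g : ι → ℝ) : Commute (colProj V s) (V * diagonal g * Vᵀ) := by
  rw [Commute, SemiconjBy, colProj, conj_diagonal_mul_conj_diagonal hV,
    conj_diagonal_mul_conj_diagonal hV, mul_comm]

theorem trace_colProj_mul_conj_diagonal {V : Matrix ι ι ℝ} (hV : Vᵀ * V = 1) (s : Finset ι)
    (g : ι → ℝ) : trace (colProj V s * (V * diagonal g * Vᵀ)) = ∑ j ∈ s, g j := by
  rw [colProj, conj_diagonal_mul_conj_diagonal hV, trace_mul_comm, ← Matrix.mul_assoc, hV,
    Matrix.one_mul, trace_diagonal]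
  simp [sum_ite_mem]

end ColumnProjection

section Euclidean

variable {ι κ : Type*} [Fintype ι] [Fintype κ]

theorem sum_sq_eq_norm_toLp_sq (x : κ → ℝ) : ∑ k, x k ^ 2 = ‖WithLp.toLp 2 x‖ ^ 2 :=
  (EuclideanSpace.real_norm_sq_eq _).symm

theorem noisyKaczmarzStep_toLp (a e : κ → ℝ) (η : ℝ) :
    noisyKaczmarzStep (WithLp.toLp 2 a) (WithLp.toLp 2 e) η =
      WithLp.toLp 2 fun k => e k - (a ⬝ᵥ e / ∑ l, a l ^ 2) * a k + η * a k / ∑ l, a l ^ 2 := by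
  ext k
  simp only [noisyKaczmarzStep, kaczmarzStep, EuclideanSpace.inner_toLp_toLp, star_trivial,
    dotProduct_comm e, ← sum_sq_eq_norm_toLp_sq, PiLp.add_apply, PiLp.sub_apply, PiLp.smul_apply,
    smul_eq_mul]
  ring

variable [DecidableEq κ]

theorem isSymmetricProjection_toEuclideanLin {M : Matrix κ κ ℝ} (hMt : Mᵀ = M)
    (hMM : M * M = M) : (toEuclideanLin M).IsSymmetricProjection where
  isIdempotentElem := by
    rw [IsIdempotentElem, Module.End.mul_eq_comp, ← toLpLin_mul_same, hMM]
  isSymmetric := isSymmetric_toEuclideanLin_iff.mpr (by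
    rw [IsHermitian, conjTranspose_eq_transpose_of_trivial, hMt])

theorem sum_inner_row_smul_row (A : Matrix ι κ ℝ) (x : EuclideanSpace ℝ κ) :
    ∑ i, ⟪WithLp.toLp 2 (A i), x⟫ • WithLp.toLp 2 (A i) = toEuclideanLin (Aᵀ * A) x := by
  ext k
  simp only [EuclideanSpace.inner_eq_star_dotProduct, dotProduct, Pi.star_apply, star_trivial,
    WithLp.ofLp_sum, WithLp.ofLp_smul, Finset.sum_apply, Pi.smul_apply, smul_eq_mul, sum_mul,
    ofLp_toLpLin, toLin'_apply, mulVec, mul_apply, transpose_apply]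
  rw [sum_comm]
  exact sum_congr rfl fun _ _ => sum_congr rfl fun _ _ => by ring

theorem toEuclideanLin_sum_inner_smul_row (A : Matrix ι κ ℝ) {M : Matrix κ κ ℝ}
    (hM : Commute M (Aᵀ * A)) (x : EuclideanSpace ℝ κ) :
    toEuclideanLin M (∑ i, ⟪WithLp.toLp 2 (A i), x⟫ • WithLp.toLp 2 (A i)) =
      ∑ i, ⟪WithLp.toLp 2 (A i), toEuclideanLin M x⟫ • WithLp.toLp 2 (A i) := by
  rw [sum_inner_row_smul_row, sum_inner_row_smul_row, ← LinearMap.comp_apply,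
    ← LinearMap.comp_apply, ← toLpLin_mul_same, ← toLpLin_mul_same, hM.eq]

theorem sum_sq_norm_toEuclideanLin_row (A : Matrix ι κ ℝ) {M : Matrix κ κ ℝ} (hMt : Mᵀ = M)
    (hMM : M * M = M) :
    ∑ i, ‖toEuclideanLin M (WithLp.toLp 2 (A i))‖ ^ 2 = trace (M * (Aᵀ * A)) := by
  have hP := isSymmetricProjection_toEuclideanLin hMt hMM
  simp_rw [← real_inner_self_eq_norm_sq, hP.inner_map_map]
  simp only [toLpLin_toLp, toLin'_apply, EuclideanSpace.inner_toLp_toLp, dotProduct, mulVec,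
    Pi.star_apply, star_trivial, sum_mul, trace, diag_apply, mul_apply, transpose_apply, mul_sum]
  rw [sum_comm]
  refine sum_congr rfl fun p _ => ?_
  rw [sum_comm]
  exact sum_congr rfl fun _ _ => sum_congr rfl fun _ _ => by ring

end Euclidean

theorem transpose_mul_self_eq_of_svd {ι κ : Type*} [Fintype ι] [Fintype κ] [DecidableEq ι]
    {A : Matrix ι κ ℝ} {U : Matrix ι ι ℝ} {S : Matrix ι κ ℝ} {V : Matrix κ κ ℝ} (hU : Uᵀ * U = 1)
    (hA : A = U * S * Vᵀ) : Aᵀ * A = V * (Sᵀ * S) * Vᵀ := by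
  rw [hA, transpose_mul, transpose_mul, transpose_transpose]
  simp only [Matrix.mul_assoc]
  rw [← Matrix.mul_assoc Uᵀ, hU, Matrix.one_mul]

theorem transpose_mul_self_of_rectangular_diagonal {n m : ℕ} {S : Matrix (Fin n) (Fin m) ℝ}
    {σ : ℕ → ℝ} (hS : ∀ i j, S i j = if (i : ℕ) = (j : ℕ) then σ i else 0) :
    Sᵀ * S = diagonal fun j : Fin m => if (j : ℕ) < n then σ j ^ 2 else 0 := by
  ext j j'
  simp only [mul_apply, transpose_apply, hS, diagonal_apply]
  by_cases hjj : j = j'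
  · subst hjj
    by_cases hj : (j : ℕ) < n
    · rw [Fintype.sum_eq_single ⟨j, hj⟩ fun i hi => by simp [Fin.ext_iff.not.mp hi]]
      simp [hj, sq]
    · rw [if_pos rfl, if_neg hj]
      exact sum_eq_zero fun i _ => by
        rw [if_neg fun h : (i : ℕ) = j => hj (h ▸ i.isLt), zero_mul]
  · rw [if_neg hjj]
    exact sum_eq_zero fun i _ => by
      split_ifs with h h' <;> first | exact absurd (Fin.ext (h.symm.trans h')) hjj | simp

theorem sum_filter_le_ite_lt (f : ℕ → ℝ) (L m n : ℕ) :
    ∑ j ∈ univ.filter (fun j : Fin m => L ≤ (j : ℕ)), (if (j : ℕ) < n then f j else 0) =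
      ∑ j ∈ Ico L (min m n), f j := by
  rw [sum_filter,
    Fin.sum_univ_eq_sum_range (fun j => if L ≤ j then if j < n then f j else 0 else 0) m,
    ← sum_filter, ← sum_filter]
  congr 1
  ext j
  simp only [mem_filter, mem_range, mem_Ico, lt_min_iff]
  omega

theorem rkm_preasymptotic_high_noisy_general (n m : ℕ) (A : Matrix (Fin n) (Fin m) ℝ)
    (U : Matrix (Fin n) (Fin n) ℝ) (V : Matrix (Fin m) (Fin m) ℝ)
    (S : Matrix (Fin n) (Fin m) ℝ) (σ : ℕ → ℝ)
    (hU : Uᵀ * U = 1)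
    (hV : Vᵀ * V = 1) (hV' : V * Vᵀ = 1)
    (hS : ∀ i j, S i j = if (i : ℕ) = (j : ℕ) then σ (i : ℕ) else 0)
    (hA : A = U * S * Vᵀ)
    (L : ℕ)
    (PL PH : (Fin m → ℝ) → (Fin m → ℝ))
    (hPL : ∀ z k, PL z k = ∑ j ∈ Finset.univ.filter (fun j : Fin m => (j : ℕ) < L),
      (∑ l, V l j * z l) * V k j)
    (hPH : ∀ z k, PH z k = ∑ j ∈ Finset.univ.filter (fun j : Fin m => L ≤ (j : ℕ)),
      (∑ l, V l j * z l) * V k j)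
    (F : ℝ) (hF : F = ∑ i, ∑ k, A i k ^ 2)
    (c₂ : ℝ)
    (hc₂ : c₂ = (∑ j ∈ Finset.Ico L (min m n), σ j ^ 2) / F)
    (δ : ℝ) (hδ : 0 ≤ δ) (η : Fin n → ℝ) (hη : ∑ i, η i ^ 2 ≤ δ ^ 2)
    (ek : Fin m → ℝ) (e' : Fin n → Fin m → ℝ)
    (he' : ∀ i k, e' i k = ek k - ((A i ⬝ᵥ ek) / (∑ l, A i l ^ 2)) * A i k
      + η i * A i k / (∑ l, A i l ^ 2)) :
    ∑ i, ((∑ l, A i l ^ 2) / F) * (∑ k, (PH (e' i)) k ^ 2) ≤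
      c₂ * (∑ k, (PL ek) k ^ 2) + (1 + c₂) * (∑ k, (PH ek) k ^ 2)
      + δ ^ 2 / F + (2 / Real.sqrt F) * δ * Real.sqrt c₂ * Real.sqrt (∑ k, ek k ^ 2) := by
  set H := univ.filter fun j : Fin m => L ≤ (j : ℕ)
  set P := toEuclideanLin (colProj V H)
  set a := fun i => WithLp.toLp 2 (A i)
  have hP : P.IsSymmetricProjection :=
    isSymmetricProjection_toEuclideanLin (colProj_transpose V H) (colProj_mul_self hV H)
  have hAA : Aᵀ * A = V * diagonal (fun j : Fin m => if (j : ℕ) < n then σ j ^ 2 else 0) * Vᵀ := by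
    rw [transpose_mul_self_eq_of_svd hU hA, transpose_mul_self_of_rectangular_diagonal hS]
  have hPH_eq : ∀ z, PH z = colProj V H *ᵥ z :=
    fun z => funext fun k => by rw [hPH, colProj_mulVec_apply]
  have hPL_eq : PL ek = ek - colProj V H *ᵥ ek := by
    have hcompl : Hᶜ = univ.filter fun j : Fin m => (j : ℕ) < L := by ext; simp [H]
    rw [← colProj_compl_mulVec hV', hcompl]
    exact funext fun k => by rw [hPL, colProj_mulVec_apply]
  have he'_eq : ∀ i, e' i = WithLp.ofLp (noisyKaczmarzStep (a i) (WithLp.toLp 2 ek) (η i)) :=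
    fun i => by rw [noisyKaczmarzStep_toLp]; exact funext (he' i)
  have hc : c₂ = (∑ i, ‖P (a i)‖ ^ 2) / F := by
    rw [sum_sq_norm_toEuclideanLin_row A (colProj_transpose V H) (colProj_mul_self hV H), hAA,
      trace_colProj_mul_conj_diagonal hV, hc₂, ← sum_filter_le_ite_lt]
  have hcomm : ∀ x, P (∑ i, ⟪a i, x⟫ • a i) = ∑ i, ⟪a i, P x⟫ • a i :=
    toEuclideanLin_sum_inner_smul_row A (hAA ▸ commute_colProj_conj_diagonal hV H _)
  have key := sum_weighted_sq_norm_map_noisyKaczmarzStep_le hP a hcomm (WithLp.toLp 2 ek) η hδ hη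
    (hF.trans <| sum_congr rfl fun i _ => sum_sq_eq_norm_toLp_sq _) hc
  simp_rw [hPH_eq, hPL_eq, he'_eq, sum_sq_eq_norm_toLp_sq, Real.sqrt_sq (norm_nonneg _)]
  exact key

/-- Theorem 3.6 (high-frequency part), noisy data `bᵢᵟ = ⟨aᵢ,x*⟩ + ηᵢ`, `‖η‖ ≤ δ`:
`E[‖P_H e_{k+1}‖² | e_k] ≤ c₂‖P_L e_k‖² + (1+c₂)‖P_H e_k‖² + δ²/‖A‖_F² + (2/‖A‖_F)δ√c₂‖e_k‖`,
with `c₁ = σ_L²/‖A‖_F²`, `c₂ = (Σ_{j=L+1}^r σ_j²)/‖A‖_F²` (0-based indexing; `F = ‖A‖_F²`). -/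
theorem rkm_preasymptotic_high_noisy (n m : ℕ) (A : Matrix (Fin n) (Fin m) ℝ)
    (U : Matrix (Fin n) (Fin n) ℝ) (V : Matrix (Fin m) (Fin m) ℝ)
    (S : Matrix (Fin n) (Fin m) ℝ) (σ : ℕ → ℝ)
    (hU : Uᵀ * U = 1) (hU' : U * Uᵀ = 1)
    (hV : Vᵀ * V = 1) (hV' : V * Vᵀ = 1)
    (hS : ∀ i j, S i j = if (i : ℕ) = (j : ℕ) then σ (i : ℕ) else 0)
    (hσmono : ∀ i j : ℕ, i ≤ j → σ j ≤ σ i) (hσnonneg : ∀ j, 0 ≤ σ j)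
    (hA : A = U * S * Vᵀ)
    (hrows : ∀ i, A i ≠ 0)
    (L : ℕ) (hL1 : 1 ≤ L) (hLm : L ≤ m)
    (PL PH : (Fin m → ℝ) → (Fin m → ℝ))
    (hPL : ∀ z k, PL z k = ∑ j ∈ Finset.univ.filter (fun j : Fin m => (j : ℕ) < L),
      (∑ l, V l j * z l) * V k j)
    (hPH : ∀ z k, PH z k = ∑ j ∈ Finset.univ.filter (fun j : Fin m => L ≤ (j : ℕ)),
      (∑ l, V l j * z l) * V k j)
    (F : ℝ) (hF : F = ∑ i, ∑ k, A i k ^ 2)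
    (c₁ c₂ : ℝ) (hc₁ : c₁ = σ (L - 1) ^ 2 / F)
    (hc₂ : c₂ = (∑ j ∈ Finset.Ico L (min m n), σ j ^ 2) / F)
    (δ : ℝ) (hδ : 0 ≤ δ) (η : Fin n → ℝ) (hη : ∑ i, η i ^ 2 ≤ δ ^ 2)
    (ek : Fin m → ℝ) (e' : Fin n → Fin m → ℝ)
    (he' : ∀ i k, e' i k = ek k - ((A i ⬝ᵥ ek) / (∑ l, A i l ^ 2)) * A i k
      + η i * A i k / (∑ l, A i l ^ 2)) :
    ∑ i, ((∑ l, A i l ^ 2) / F) * (∑ k, (PH (e' i)) k ^ 2) ≤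
      c₂ * (∑ k, (PL ek) k ^ 2) + (1 + c₂) * (∑ k, (PH ek) k ^ 2)
      + δ ^ 2 / F + (2 / Real.sqrt F) * δ * Real.sqrt c₂ * Real.sqrt (∑ k, ek k ^ 2) :=
  rkm_preasymptotic_high_noisy_general n m A U V S σ hU hV hV' hS hA L PL PH hPL hPH F hF c₂ hc₂ δ
    hδ η hη ek e' he'
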